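/- arXiv:1705.01236 — 3 statements merged into one kernel-verified Lean document; each statement's English description precedes it below -/
import Mathlib

section
/- Let n ≥ 1, c ∈ (0,1), let W be a c-pinched n×n complex Hermitian matrix and let V be any n×n complex Hermitian matrix. Then tr(W⁻¹V) is a real number and (tr(W⁻¹V))² ≥ ½·(tr V)² − (3n·c²/(1−c)⁴)·‖V‖_F². (This is the linearization estimate for the contracted trace in the proof of Proposition 3.2 of the paper.) -/
open scoped ComplexOrder

/-- A matrix `W` is `c`-pinched if it is Hermitian and `(1−c)·1 ≤ W ≤ (1+c)·1` in the
sense of the positive-semidefinite order. -/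
def IsPinched {n : ℕ} (c : ℝ) (W : Matrix (Fin n) (Fin n) ℂ) : Prop :=
  W.IsHermitian ∧ (W - ((1 - c : ℝ) : ℂ) • 1).PosSemidef ∧
    (((1 + c : ℝ) : ℂ) • 1 - W).PosSemidef

/-- Squared Frobenius norm `‖V‖_F² = ∑_{j,k} |V_{jk}|²` of a complex matrix. -/
noncomputable def frobSq {n : ℕ} (V : Matrix (Fin n) (Fin n) ℂ) : ℝ :=
  ∑ j, ∑ k, Complex.normSq (V j k)
/-! Diagonalize `W = U diag(μ) U*`; the Loewner bounds put every eigenvalue `μᵢ` in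
`[1 - c, 1 + c]`. With `vᵢ` the (real) diagonal entries of `U* V U` we get `tr(W⁻¹V) = ∑ μᵢ⁻¹ vᵢ`,
`tr V = ∑ vᵢ` and `∑ vᵢ² ≤ ‖V‖_F²`. Writing `μᵢ⁻¹ = 1 + (μᵢ⁻¹ - 1)` with
`(μᵢ⁻¹ - 1)² ≤ c²/(1 - c)²`, Cauchy–Schwarz bounds the perturbation `∑ (μᵢ⁻¹ - 1) vᵢ`, and
`(x + y)² ≥ x²/2 - y²` concludes. -/

open Matrix

lemma half_sq_sub_sq_le_sq_add (x y : ℝ) : 1 / 2 * x ^ 2 - y ^ 2 ≤ (x + y) ^ 2 := by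
  nlinarith [sq_nonneg (x + 2 * y)]

lemma half_sq_sum_sub_le_sq_sum_mul {ι : Type*} [Fintype ι] (a v : ι → ℝ) {δ : ℝ}
    (ha : ∀ i, (a i - 1) ^ 2 ≤ δ) :
    1 / 2 * (∑ i, v i) ^ 2 - Fintype.card ι * δ * ∑ i, v i ^ 2 ≤ (∑ i, a i * v i) ^ 2 := by
  have hsplit : ∑ i, a i * v i = ∑ i, v i + ∑ i, (a i - 1) * v i := by
    rw [← Finset.sum_add_distrib]
    exact Finset.sum_congr rfl fun i _ => by ring
  have hcs : (∑ i, (a i - 1) * v i) ^ 2 ≤ Fintype.card ι * δ * ∑ i, v i ^ 2 := calc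
    _ ≤ (∑ i, (a i - 1) ^ 2) * ∑ i, v i ^ 2 := Finset.sum_mul_sq_le_sq_mul_sq _ _ _
    _ ≤ (∑ _i : ι, δ) * ∑ i, v i ^ 2 := by gcongr with i; exact ha i
    _ = _ := by simp
  rw [hsplit]
  linarith [half_sq_sub_sq_le_sq_add (∑ i, v i) (∑ i, (a i - 1) * v i)]

lemma inv_sub_one_sq_le {μ c : ℝ} (hc : c < 1) (hμ : μ ∈ Set.Icc (1 - c) (1 + c)) :
    (μ⁻¹ - 1) ^ 2 ≤ c ^ 2 / (1 - c) ^ 2 := by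
  obtain ⟨hlo, hhi⟩ := hμ
  have hμ0 : 0 < μ := by linarith
  rw [show μ⁻¹ - 1 = (1 - μ) / μ by field_simp, div_pow]
  exact div_le_div₀ (sq_nonneg c) (sq_le_sq' (by linarith) (by linarith)) (by positivity)
    (pow_le_pow_left₀ (by linarith) hlo 2)

lemma trace_mul_diagonal_mul_mul {ι R : Type*} [Fintype ι] [DecidableEq ι] [CommRing R]
    (A B V : Matrix ι ι R) (d : ι → R) :
    (A * diagonal d * B * V).trace = ∑ i, d i * (B * V * A) i i := by
  rw [Matrix.mul_assoc _ B V, trace_mul_cycle, trace_mul_comm]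
  simp only [trace, diag_apply, diagonal_mul]

section Spectrum

open scoped MatrixOrder

variable {ι 𝕜 : Type*} [Fintype ι] [DecidableEq ι] [RCLike 𝕜] {A : Matrix ι ι 𝕜}

lemma Matrix.IsHermitian.eigenvalues_mem_Icc_of_le (hA : A.IsHermitian) {a b : ℝ}
    (ha : algebraMap ℝ _ a ≤ A) (hb : A ≤ algebraMap ℝ _ b) (i : ι) :
    hA.eigenvalues i ∈ Set.Icc a b :=
  have hi := hA.eigenvalues_mem_spectrum_real i
  ⟨(algebraMap_le_iff_le_spectrum hA.isSelfAdjoint).1 ha _ hi,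
    (le_algebraMap_iff_spectrum_le hA.isSelfAdjoint).1 hb _ hi⟩

lemma IsPinched.eigenvalues_mem_Icc {n : ℕ} {c : ℝ} {W : Matrix (Fin n) (Fin n) ℂ}
    (hW : IsPinched c W) (i : Fin n) : hW.1.eigenvalues i ∈ Set.Icc (1 - c) (1 + c) := by
  refine hW.1.eigenvalues_mem_Icc_of_le ?_ ?_ i <;>
    rw [Matrix.le_iff, Algebra.algebraMap_eq_smul_one, ← Complex.coe_smul]
  exacts [hW.2.1, hW.2.2]

lemma Matrix.IsHermitian.inv_eq_spectral (hA : A.IsHermitian) (h : ∀ i, hA.eigenvalues i ≠ 0) :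
    A⁻¹ = (hA.eigenvectorUnitary : Matrix ι ι 𝕜) * diagonal (fun i => (hA.eigenvalues i : 𝕜)⁻¹) *
      star (hA.eigenvectorUnitary : Matrix ι ι 𝕜) := by
  apply inv_eq_right_inv
  conv_lhs => arg 1; rw [hA.spectral_theorem, Unitary.conjStarAlgAut_apply]
  set U : Matrix ι ι 𝕜 := ↑hA.eigenvectorUnitary
  set D : Matrix ι ι 𝕜 := diagonal (RCLike.ofReal ∘ hA.eigenvalues)
  set D' : Matrix ι ι 𝕜 := diagonal fun i => (hA.eigenvalues i : 𝕜)⁻¹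
  have hDD' : D * D' = 1 := by
    rw [diagonal_mul_diagonal, ← diagonal_one]
    exact congrArg diagonal (funext fun i => mul_inv_cancel₀ (by simpa using h i))
  calc U * D * star U * (U * D' * star U) = U * (D * (star U * U) * D') * star U := by
        simp only [Matrix.mul_assoc]
    _ = 1 := by
      rw [Unitary.coe_star_mul_self, Matrix.mul_one, hDD', Matrix.mul_one]
      exact Unitary.coe_mul_star_self _

lemma Matrix.IsHermitian.trace_inv_mul_eq_sum (hA : A.IsHermitian)
    (h : ∀ i, hA.eigenvalues i ≠ 0) (V : Matrix ι ι 𝕜) :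
    (A⁻¹ * V).trace = ∑ i, (hA.eigenvalues i : 𝕜)⁻¹ *
      (star (hA.eigenvectorUnitary : Matrix ι ι 𝕜) * V * hA.eigenvectorUnitary) i i := by
  rw [hA.inv_eq_spectral h, trace_mul_diagonal_mul_mul]

end Spectrum

section Frobenius

variable {n : ℕ}

lemma frobSq_eq_re_trace_conjTranspose_mul (M : Matrix (Fin n) (Fin n) ℂ) :
    frobSq M = (Mᴴ * M).trace.re := by
  rw [frobSq, trace, Complex.re_sum, Finset.sum_comm]
  refine Finset.sum_congr rfl fun j _ => ?_
  simp only [diag_apply, mul_apply, conjTranspose_apply, Complex.re_sum]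
  refine Finset.sum_congr rfl fun k _ => ?_
  simp [← Complex.normSq_eq_conj_mul_self]

lemma frobSq_unitary_conj {U : Matrix (Fin n) (Fin n) ℂ} (hU : U ∈ unitaryGroup (Fin n) ℂ)
    (V : Matrix (Fin n) (Fin n) ℂ) : frobSq (star U * V * U) = frobSq V := by
  have hUU : U * star U = 1 := Unitary.mul_star_self_of_mem hU
  have hconj : (star U * V * U)ᴴ * (star U * V * U) = star U * (Vᴴ * V) * U := calc
    _ = star U * (Vᴴ * (U * star U) * V) * U := by
      simp only [← star_eq_conjTranspose, star_mul, star_star, Matrix.mul_assoc]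
    _ = _ := by rw [hUU, Matrix.mul_one, Matrix.mul_assoc]
  rw [frobSq_eq_re_trace_conjTranspose_mul, frobSq_eq_re_trace_conjTranspose_mul, hconj,
    trace_mul_cycle, hUU, Matrix.one_mul]

lemma sum_sq_re_diag_le_frobSq (M : Matrix (Fin n) (Fin n) ℂ) :
    ∑ i, (M i i).re ^ 2 ≤ frobSq M :=
  Finset.sum_le_sum fun i _ => calc
    (M i i).re ^ 2 ≤ Complex.normSq (M i i) := by rw [sq]; exact Complex.re_sq_le_normSq _
    _ ≤ ∑ k, Complex.normSq (M i k) :=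
      Finset.single_le_sum (fun k _ => Complex.normSq_nonneg _) (Finset.mem_univ i)

end Frobenius

theorem pinched_trace_estimate_general (n : ℕ) (c : ℝ) (hc0 : 0 < c) (hc1 : c < 1)
    (W V : Matrix (Fin n) (Fin n) ℂ) (hW : IsPinched c W) (hV : V.IsHermitian) :
    ((W⁻¹ * V).trace).im = 0 ∧
    ((W⁻¹ * V).trace.re) ^ 2 ≥
      (1 / 2 : ℝ) * (V.trace.re) ^ 2 - (3 * n * c ^ 2 / (1 - c) ^ 4) * frobSq V := by
  set μ := hW.1.eigenvalues
  set U : Matrix (Fin n) (Fin n) ℂ := ↑hW.1.eigenvectorUnitary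
  set v : Fin n → ℝ := fun i => ((star U * V * U) i i).re
  have hμ : ∀ i, μ i ∈ Set.Icc (1 - c) (1 + c) := hW.eigenvalues_mem_Icc
  have hUU : U * star U = 1 := Unitary.mul_star_self_of_mem hW.1.eigenvectorUnitary.2
  have hV' : (star U * V * U).IsHermitian := by
    simpa only [star_eq_conjTranspose] using isHermitian_conjTranspose_mul_mul U hV
  have htr : (W⁻¹ * V).trace = ((∑ i, (μ i)⁻¹ * v i : ℝ) : ℂ) := by
    rw [hW.1.trace_inv_mul_eq_sum fun i => by linarith [(hμ i).1]]
    push_cast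
    exact Finset.sum_congr rfl fun i _ => congrArg _ (hV'.coe_re_apply_self i).symm
  have htrV : V.trace.re = ∑ i, v i := by
    rw [show V.trace = (star U * V * U).trace by rw [trace_mul_cycle, hUU, Matrix.one_mul]]
    simp only [trace, diag_apply, Complex.re_sum, v]
  have hdiag : ∑ i, v i ^ 2 ≤ frobSq V :=
    frobSq_unitary_conj hW.1.eigenvectorUnitary.2 V ▸ sum_sq_re_diag_le_frobSq _
  have hconst : n * (c ^ 2 / (1 - c) ^ 2) ≤ 3 * n * c ^ 2 / (1 - c) ^ 4 := by
    have h1c : 0 < 1 - c := by linarith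
    rw [show 3 * n * c ^ 2 / (1 - c) ^ 4 = n * (c ^ 2 / (1 - c) ^ 2) * (3 / (1 - c) ^ 2) by
      field_simp]
    refine le_mul_of_one_le_right (by positivity) ?_
    rw [one_le_div₀ (by positivity)]
    nlinarith
  refine ⟨by rw [htr, Complex.ofReal_im], ?_⟩
  rw [htr, Complex.ofReal_re, htrV, ge_iff_le]
  calc _ ≤ 1 / 2 * (∑ i, v i) ^ 2 - n * (c ^ 2 / (1 - c) ^ 2) * ∑ i, v i ^ 2 := by gcongr
    _ ≤ _ := by
      simpa using half_sq_sum_sub_le_sq_sum_mul _ v fun i => inv_sub_one_sq_le hc1 (hμ i)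

/-- **Linearization estimate for the contracted trace.**  If `W` is `c`-pinched with
`c ∈ (0,1)` and `V` is Hermitian, then `tr(W⁻¹V)` is real and
`(tr(W⁻¹V))² ≥ ½·(tr V)² − (3n·c²/(1−c)⁴)·‖V‖_F²`. -/
theorem pinched_trace_estimate (n : ℕ) (hn : 1 ≤ n) (c : ℝ) (hc0 : 0 < c) (hc1 : c < 1)
    (W V : Matrix (Fin n) (Fin n) ℂ) (hW : IsPinched c W) (hV : V.IsHermitian) :
    ((W⁻¹ * V).trace).im = 0 ∧
    ((W⁻¹ * V).trace.re) ^ 2 ≥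
      (1 / 2 : ℝ) * (V.trace.re) ^ 2 - (3 * n * c ^ 2 / (1 - c) ^ 4) * frobSq V :=
  pinched_trace_estimate_general n c hc0 hc1 W V hW hV
end

section
/- Let n ≥ 1 and let u : ℂⁿ → ℝ be a C³ function. For x ∈ ℂⁿ let G(x) be the n×n complex matrix with entries G(x)_{jk} := ∂_j∂_{\bar k} u(x), and let A(x) := adjugate(G(x)), so that G(x)·A(x) = A(x)·G(x) = det(G(x))·1. Then for every index i and every x ∈ ℂⁿ: ∑_k ∂_k( x ↦ A(x)_{ik} )(x) = 0, and ∑_k ∂_{\bar k}( x ↦ A(x)_{ki} )(x) = 0. (This is the Kähler divergence-free identity ∂_a(g^{i\bar j} det(g_{i\bar j})) = 0, equation (1.4) of the paper, for metrics given by a potential.) -/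
/-- The Wirtinger derivative `∂_j f` of `f : ℂⁿ → ℂ`:
`∂_j f(x) = ½(Df(x)[e_j] − i·Df(x)[i·e_j])` with `Df` the real Fréchet derivative. -/
noncomputable def wder {n : ℕ} (j : Fin n) (f : EuclideanSpace ℂ (Fin n) → ℂ)
    (x : EuclideanSpace ℂ (Fin n)) : ℂ :=
  (1 / 2 : ℂ) * (fderiv ℝ f x (EuclideanSpace.single j 1)
    - Complex.I * fderiv ℝ f x (Complex.I • EuclideanSpace.single j 1))

/-- The conjugate Wirtinger derivative `∂_{\bar j} f`:
`∂_{\bar j} f(x) = ½(Df(x)[e_j] + i·Df(x)[i·e_j])`. -/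
noncomputable def wderBar {n : ℕ} (j : Fin n) (f : EuclideanSpace ℂ (Fin n) → ℂ)
    (x : EuclideanSpace ℂ (Fin n)) : ℂ :=
  (1 / 2 : ℂ) * (fderiv ℝ f x (EuclideanSpace.single j 1)
    + Complex.I * fderiv ℝ f x (Complex.I • EuclideanSpace.single j 1))

/-- The complex Hessian `(∂_j∂_{\bar k} u(x))_{j,k}` of a real-valued function `u`. -/
noncomputable def cHessian {n : ℕ} (u : EuclideanSpace ℂ (Fin n) → ℝ)
    (x : EuclideanSpace ℂ (Fin n)) : Matrix (Fin n) (Fin n) ℂ :=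
  fun j k => wder j (wderBar k fun y => (u y : ℂ)) x

/-!
The adjugate of `G = (∂_j ∂̄_k u)` satisfies `adj(G)_{ik} = det(G with row k replaced by e_i)`.
Differentiating this determinant row by row, `∑_k ∂_k adj(G)_{ik}` becomes a sum over pairs
`(k, a)`, `a ≠ k`, of determinants in which row `k` is `e_i` and row `a` is `∂_k G_{a·}`.
Since `∂_k G_{ab} = ∂_k ∂_a ∂̄_b u` is symmetric in `k` and `a`, exchanging `k` and `a`
swaps two rows, so the terms cancel in pairs (the Piola identity). The second identity is the
first one for `Gᵀ = (∂̄_j ∂_k u)`, with the roles of `∂` and `∂̄` exchanged.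
-/

open Matrix Complex

section Determinant

variable {𝕜 : Type*} [NontriviallyNormedField 𝕜] {R : Type*} [NormedCommRing R]
  [NormedAlgebra 𝕜 R] {E : Type*} [NormedAddCommGroup E] [NormedSpace 𝕜 E]
  {ι : Type*} [Fintype ι] [DecidableEq ι]

noncomputable def Matrix.detRowContinuousMultilinear :
    ContinuousMultilinearMap 𝕜 (fun _ : ι => ι → R) R :=
  { (detRowAlternating : (ι → R) [⋀^ι]→ₗ[R] R).toMultilinearMap.restrictScalars 𝕜 with
    cont := continuous_id.matrix_det }

theorem fderiv_det_apply {M : E → Matrix ι ι R} {x : E}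
    (hM : ∀ a b, DifferentiableAt 𝕜 (fun y => M y a b) x) (v : E) :
    fderiv 𝕜 (fun y => (M y).det) x v
      = ∑ a, ((M x).updateRow a fun b => fderiv 𝕜 (fun y => M y a b) x v).det := by
  have hrows : HasFDerivAt (fun y => (M y : ι → ι → R))
      (ContinuousLinearMap.pi fun a => ContinuousLinearMap.pi fun b =>
        fderiv 𝕜 (fun y => M y a b) x) x :=
    hasFDerivAt_pi.2 fun a => hasFDerivAt_pi.2 fun b => (hM a b).hasFDerivAt
  have hdet := ((detRowContinuousMultilinear (𝕜 := 𝕜)).hasFDerivAt (M x)).comp x hrows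
  rw [show (fun y => (M y).det) = detRowContinuousMultilinear (𝕜 := 𝕜) ∘ M from rfl,
    hdet.fderiv]
  exact detRowContinuousMultilinear.linearDeriv_apply (M x : ι → ι → R) _

end Determinant

section Alternating

variable {ι : Type*} [Fintype ι] [DecidableEq ι]

theorem Fintype.sum_sum_eq_zero_of_skew {M : Type*} [AddCommMonoid M] (T : ι → ι → M)
    (hdiag : ∀ k, T k k = 0) (hskew : ∀ k a, k ≠ a → T k a + T a k = 0) :
    ∑ k, ∑ a, T k a = 0 := by
  rw [← Fintype.sum_prod_type']
  refine Finset.sum_ninvolution Prod.swap (fun p => ?_) (fun p hp hswap => hp ?_)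
    (fun _ => Finset.mem_univ _) (fun _ => rfl)
  · by_cases h : p.1 = p.2
    · simp [h, hdiag]
    · exact hskew _ _ h
  · obtain ⟨k, a⟩ := p
    obtain rfl : a = k := congrArg Prod.fst hswap
    exact hdiag a

theorem det_updateRow_updateRow_add_swap {R : Type*} [CommRing R] (A : Matrix ι ι R) {k a : ι}
    (h : k ≠ a) (r s : ι → R) :
    ((A.updateRow k r).updateRow a s).det + ((A.updateRow a r).updateRow k s).det = 0 := by
  have hswap : (A.updateRow a r).updateRow k s
      = of ((A.updateRow k r).updateRow a s ∘ Equiv.swap k a) := by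
    ext c d
    change _ = (A.updateRow k r).updateRow a s (Equiv.swap k a c) d
    simp only [updateRow_apply, Equiv.swap_apply_def]
    split_ifs <;> simp_all
  rw [hswap]
  exact detRowAlternating.map_add_swap ((A.updateRow k r).updateRow a s) h

end Alternating

section ComplexLineDeriv

variable {E : Type*} [NormedAddCommGroup E] [NormedSpace ℝ E] {ι : Type*} [Fintype ι]
  [DecidableEq ι]

/-- The derivative of `f` along the complexified direction `v + i w`, i.e. the `ℂ`-linear
extension of `Df(x)` evaluated there. -/
noncomputable def complexLineDeriv (v w : E) (f : E → ℂ) (x : E) : ℂ :=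
  fderiv ℝ f x v + I * fderiv ℝ f x w

@[simp] theorem complexLineDeriv_const (v w : E) (c : ℂ) (x : E) :
    complexLineDeriv v w (fun _ => c) x = 0 := by
  simp [complexLineDeriv]

theorem complexLineDeriv_det {M : E → Matrix ι ι ℂ} {x : E}
    (hM : ∀ a b, DifferentiableAt ℝ (fun y => M y a b) x) (v w : E) :
    complexLineDeriv v w (fun y => (M y).det) x
      = ∑ a, ((M x).updateRow a fun b => complexLineDeriv v w (fun y => M y a b) x).det := by
  simp only [complexLineDeriv, fderiv_det_apply hM, Finset.mul_sum, ← Finset.sum_add_distrib,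
    ← det_updateRow_smul, ← det_updateRow_add]
  rfl

theorem contDiff_complexLineDeriv {m : WithTop ℕ∞} {f : E → ℂ} (hf : ContDiff ℝ (m + 1) f)
    (v w : E) : ContDiff ℝ m (complexLineDeriv v w f) :=
  have hf' := hf.fderiv_right le_rfl
  (hf'.clm_apply contDiff_const).add (contDiff_const.mul (hf'.clm_apply contDiff_const))

theorem hasFDerivAt_complexLineDeriv {f : E → ℂ} {x : E} (hf : ContDiffAt ℝ 2 f x) (v w : E) :
    HasFDerivAt (complexLineDeriv v w f)
      ((ContinuousLinearMap.apply ℝ ℂ v).comp (fderiv ℝ (fderiv ℝ f) x)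
        + I • (ContinuousLinearMap.apply ℝ ℂ w).comp (fderiv ℝ (fderiv ℝ f) x)) x := by
  have hD : HasFDerivAt (fderiv ℝ f) (fderiv ℝ (fderiv ℝ f) x) x :=
    ((hf.fderiv_right (m := 1) (by norm_num)).differentiableAt one_ne_zero).hasFDerivAt
  exact (((ContinuousLinearMap.apply ℝ ℂ v).hasFDerivAt.comp x hD).add
    (((ContinuousLinearMap.apply ℝ ℂ w).hasFDerivAt.comp x hD).const_mul I))

theorem complexLineDeriv_comm {f : E → ℂ} {x : E} (hf : ContDiffAt ℝ 2 f x) (v w v' w' : E) :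
    complexLineDeriv v w (complexLineDeriv v' w' f) x
      = complexLineDeriv v' w' (complexLineDeriv v w f) x := by
  have hsymm := hf.isSymmSndFDerivAt (by simp [minSmoothness_of_isRCLikeNormedField])
  simp only [complexLineDeriv, (hasFDerivAt_complexLineDeriv hf _ _).fderiv]
  simp only [_root_.add_apply, _root_.smul_apply,
    ContinuousLinearMap.comp_apply, ContinuousLinearMap.apply_apply, smul_eq_mul,
    hsymm v v', hsymm v w', hsymm w v', hsymm w w']
  ring

theorem sum_complexLineDeriv_adjugate_eq_zero (D : ι → (E → ℂ) → E → ℂ)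
    (v w : ι → E) (hD : ∀ k, D k = complexLineDeriv (v k) (w k)) (h : ι → E → ℂ) {x : E}
    (hh : ∀ b, ContDiffAt ℝ 2 (h b) x) (i : ι) :
    ∑ k, D k (fun y => (of fun a b => D a (h b) y).adjugate i k) x = 0 := by
  set G : E → Matrix ι ι ℂ := fun y => of fun a b => D a (h b) y
  set B : ι → E → Matrix ι ι ℂ := fun k y => (G y).updateRow k (Pi.single i 1)
  have hG : ∀ a b, DifferentiableAt ℝ (fun y => G y a b) x := fun a b => by
    simpa only [G, of_apply, hD] using (hasFDerivAt_complexLineDeriv (hh b) _ _).differentiableAt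
  have hB : ∀ k a b, DifferentiableAt ℝ (fun y => B k y a b) x := by
    intro k a b
    rcases eq_or_ne a k with rfl | hak
    · simp only [B, updateRow_self]
      exact differentiableAt_const _
    · simpa only [B, updateRow_ne hak] using hG a b
  have hsymm : ∀ k a b, D k (D a (h b)) x = D a (D k (h b)) x := fun k a b => by
    simp only [hD]
    exact complexLineDeriv_comm (hh b) _ _ _ _
  have hrow : ∀ k a, a ≠ k →
      (fun b => D k (fun y => B k y a b) x) = fun b => D k (D a (h b)) x := by
    intro k a hak
    simp only [B, updateRow_ne hak]
    rfl
  calc ∑ k, D k (fun y => (G y).adjugate i k) x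
      = ∑ k, ∑ a, ((B k x).updateRow a fun b => D k (fun y => B k y a b) x).det := by
        refine Finset.sum_congr rfl fun k _ => ?_
        simp only [adjugate_apply, hD]
        exact complexLineDeriv_det (hB k) _ _
    _ = 0 := by
        refine Fintype.sum_sum_eq_zero_of_skew _ (fun k => ?_) (fun k a hka => ?_)
        · -- row `k` of `B k` is constant
          refine det_eq_zero_of_row_eq_zero k fun b => ?_
          simp [B, hD]
        · rw [hrow k a hka.symm, hrow a k hka, funext fun b => hsymm a k b]
          exact det_updateRow_updateRow_add_swap _ hka _ _

end ComplexLineDeriv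

theorem wder_eq_complexLineDeriv {n : ℕ} (j : Fin n) :
    wder j = complexLineDeriv ((2⁻¹ : ℝ) • EuclideanSpace.single j 1)
      (-(2⁻¹ : ℝ) • I • EuclideanSpace.single j 1) := by
  ext f x
  simp only [wder, complexLineDeriv, map_smul, Complex.real_smul]
  push_cast
  ring

theorem wderBar_eq_complexLineDeriv {n : ℕ} (j : Fin n) :
    wderBar j = complexLineDeriv ((2⁻¹ : ℝ) • EuclideanSpace.single j 1)
      ((2⁻¹ : ℝ) • I • EuclideanSpace.single j 1) := by
  ext f x
  simp only [wderBar, complexLineDeriv, map_smul, Complex.real_smul]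
  push_cast
  ring

theorem kahler_divergence_free_general (n : ℕ)
    (u : EuclideanSpace ℂ (Fin n) → ℝ) (hu : ContDiff ℝ 3 u) (i : Fin n)
    (x : EuclideanSpace ℂ (Fin n)) :
    (∑ k, wder k (fun y => (cHessian u y).adjugate i k) x = 0) ∧
    (∑ k, wderBar k (fun y => (cHessian u y).adjugate k i) x = 0) := by
  set U : EuclideanSpace ℂ (Fin n) → ℂ := fun y => (u y : ℂ)
  have hU : ContDiff ℝ (2 + 1) U := ofRealCLM.contDiff.comp hu
  have hwder : ∀ b, ContDiffAt ℝ 2 (wder b U) x := fun b => by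
    rw [wder_eq_complexLineDeriv]; exact (contDiff_complexLineDeriv hU _ _).contDiffAt
  have hwderBar : ∀ b, ContDiffAt ℝ 2 (wderBar b U) x := fun b => by
    rw [wderBar_eq_complexLineDeriv]; exact (contDiff_complexLineDeriv hU _ _).contDiffAt
  have hHessian_transpose : ∀ y, (cHessian u y)ᵀ = of fun a b => wderBar a (wder b U) y := by
    intro y
    ext a b
    simp only [transpose_apply, cHessian, of_apply, wder_eq_complexLineDeriv,
      wderBar_eq_complexLineDeriv]
    exact complexLineDeriv_comm (hU.of_le (by norm_num)).contDiffAt _ _ _ _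
  have hadjugate : ∀ y k, (cHessian u y).adjugate k i = ((cHessian u y)ᵀ).adjugate i k := by
    simp [← adjugate_transpose]
  constructor
  · exact sum_complexLineDeriv_adjugate_eq_zero wder _ _ wder_eq_complexLineDeriv _ hwderBar i
  · simp only [hadjugate, hHessian_transpose]
    exact sum_complexLineDeriv_adjugate_eq_zero wderBar _ _ wderBar_eq_complexLineDeriv _ hwder i

/-- **The Kähler divergence-free identity** `∂_a(g^{i\bar j} det(g_{i\bar j})) = 0`
(equation (1.4) of the paper) for metrics given by a potential:  with
`G(x) = (∂_j∂_{\bar k} u(x))_{j,k}` and `A(x) = adjugate(G(x))` (so that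
`G·A = A·G = det(G)·1`), one has `∑_k ∂_k(A_{ik}) = 0` and `∑_k ∂_{\bar k}(A_{ki}) = 0`. -/
theorem kahler_divergence_free (n : ℕ) (hn : 1 ≤ n)
    (u : EuclideanSpace ℂ (Fin n) → ℝ) (hu : ContDiff ℝ 3 u) (i : Fin n)
    (x : EuclideanSpace ℂ (Fin n)) :
    (∑ k, wder k (fun y => (cHessian u y).adjugate i k) x = 0) ∧
    (∑ k, wderBar k (fun y => (cHessian u y).adjugate k i) x = 0) :=
  kahler_divergence_free_general n u hu i x
end

section
/- Let d ≥ 1, let μ and ν be finite measures on ℝ^d, and let K ≥ 1 with K⁻¹·μ ≤ ν ≤ K·μ (as measures). Let A, B : ℝ^d → Matrix (Fin d) (Fin d) ℝ be bounded measurable maps taking values in symmetric positive semidefinite matrices such that ⟨B(x)ξ, ξ⟩ ≥ K⁻¹·⟨A(x)ξ, ξ⟩ for all x ∈ ℝ^d and ξ ∈ ℝ^d. Let λ ≥ 0 and suppose that for every bounded C¹ function u : ℝ^d → ℝ with bounded derivative and ∫ u dμ = 0 one has ∫ ⟨A(x)∇u(x), ∇u(x)⟩ dμ ≥ λ·∫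 u² dμ. Then for every bounded C¹ function u : ℝ^d → ℝ with bounded derivative and ∫ u dν = 0 one has ∫ ⟨B(x)∇u(x), ∇u(x)⟩ dν ≥ K⁻³·λ·∫ u² dν. (This is a Euclidean rendition of Lemma 5.2 of the paper: the first nonzero eigenvalue of comparable metrics are comparable, λ₁(h) ≥ ε_{K}·λ₁(g).) -/
/-! The Poincaré inequality for `μ` is applied to `u` recentred at its `μ`-mean. Recentring
cannot decrease `∫ u² dν` since `u` has `ν`-mean zero, and each of the three comparisons
`ν ≤ K μ`, `μ ≤ K ν` and `A ≤ K B` then costs one factor `K`. -/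

open MeasureTheory Matrix

/-- The gradient of `u : ℝ^d → ℝ` at `x`, as the vector of partial derivatives in the
standard coordinate directions. -/
noncomputable def grad {d : ℕ} (u : EuclideanSpace ℝ (Fin d) → ℝ)
    (x : EuclideanSpace ℝ (Fin d)) : Fin d → ℝ :=
  fun i => fderiv ℝ u x (EuclideanSpace.single i (1 : ℝ))

section ComparisonOfIntegrals

variable {α : Type*} [MeasurableSpace α] {μ ν : Measure α}

theorem MeasureTheory.Measure.le_smul_of_inv_smul_le {c : ENNReal} (hc0 : c ≠ 0) (hc : c ≠ ⊤)
    (h : c⁻¹ • μ ≤ ν) : μ ≤ c • ν :=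
  calc μ = c • c⁻¹ • μ := by rw [smul_smul, ENNReal.mul_inv_cancel hc0 hc, one_smul]
    _ ≤ c • ν := by gcongr

theorem integral_le_mul_integral_of_le_smul {c : ℝ} (hc : 0 ≤ c) (h : μ ≤ ENNReal.ofReal c • ν)
    {f : α → ℝ} (hf0 : 0 ≤ f) (hf : Integrable f ν) :
    ∫ x, f x ∂μ ≤ c * ∫ x, f x ∂ν :=
  calc ∫ x, f x ∂μ ≤ ∫ x, f x ∂(ENNReal.ofReal c • ν) :=
        integral_mono_measure h (ae_of_all _ hf0) (hf.smul_measure ENNReal.ofReal_ne_top)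
    _ = c * ∫ x, f x ∂ν := by rw [integral_smul_measure, ENNReal.toReal_ofReal hc, smul_eq_mul]

theorem integral_sq_le_integral_sub_const_sq [IsFiniteMeasure μ] {u : α → ℝ}
    (hu : Integrable u μ) (hu2 : Integrable (fun x => u x ^ 2) μ) (hmean : ∫ x, u x ∂μ = 0)
    (c : ℝ) : ∫ x, u x ^ 2 ∂μ ≤ ∫ x, (u x - c) ^ 2 ∂μ := by
  have hexpand : (fun x => (u x - c) ^ 2) = fun x => u x ^ 2 - 2 * c * u x + c ^ 2 := by
    ext x; ring
  have hlin : Integrable (fun x => u x ^ 2 - 2 * c * u x) μ := hu2.sub (hu.const_mul _)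
  rw [hexpand, integral_add hlin (integrable_const _), integral_sub hu2 (hu.const_mul _),
    integral_const_mul, hmean, integral_const, smul_eq_mul]
  nlinarith [measureReal_nonneg (μ := μ) (s := Set.univ), sq_nonneg c]

end ComparisonOfIntegrals

theorem Matrix.PosSemidef.mulVec_dotProduct_self_nonneg {ι : Type*} [Fintype ι]
    {A : Matrix ι ι ℝ} (hA : A.PosSemidef) (x : ι → ℝ) : 0 ≤ A *ᵥ x ⬝ᵥ x := by
  simpa only [star_trivial, dotProduct_comm] using hA.dotProduct_mulVec_nonneg x

section BoundedIntegrands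

variable {α : Type*} [MeasurableSpace α] {μ : Measure α} [IsFiniteMeasure μ]

theorem integrable_of_abs_le {f : α → ℝ} (hf : Measurable f) {C : ℝ} (hC : ∀ x, |f x| ≤ C) :
    Integrable f μ :=
  .of_bound hf.aestronglyMeasurable C (ae_of_all _ hC)

theorem integrable_sq_of_abs_le {f : α → ℝ} (hf : Measurable f) {C : ℝ} (hC : ∀ x, |f x| ≤ C) :
    Integrable (fun x => f x ^ 2) μ := by
  simpa only [sq] using
    (integrable_of_abs_le hf hC).bdd_mul hf.aestronglyMeasurable (ae_of_all _ hC)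

theorem integrable_mulVec_dotProduct {ι : Type*} [Fintype ι] {A : α → Matrix ι ι ℝ}
    {g : α → ι → ℝ} (hA : ∀ i j, Measurable fun x => A x i j)
    (hAbdd : ∃ M, ∀ x i j, |A x i j| ≤ M) (hg : ∀ i, Measurable fun x => g x i)
    (hgbdd : ∃ M, ∀ x i, |g x i| ≤ M) :
    Integrable (fun x => A x *ᵥ g x ⬝ᵥ g x) μ := by
  obtain ⟨MA, hMA⟩ := hAbdd
  obtain ⟨Mg, hMg⟩ := hgbdd
  have hsum : (fun x => A x *ᵥ g x ⬝ᵥ g x) = fun x => ∑ i, ∑ j, A x i j * (g x j * g x i) := by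
    ext x
    simp only [dotProduct, mulVec, Finset.sum_mul, mul_assoc]
  rw [hsum]
  refine integrable_finsetSum _ fun i _ => integrable_finsetSum _ fun j _ => ?_
  have hgg : Integrable (fun x => g x j * g x i) μ :=
    (integrable_of_abs_le (hg i) (hMg · i)).bdd_mul (hg j).aestronglyMeasurable
      (ae_of_all _ (hMg · j))
  exact hgg.bdd_mul (hA i j).aestronglyMeasurable (ae_of_all _ (hMA · i j))

end BoundedIntegrands

section Gradient

variable {d : ℕ}

theorem abs_grad_le_norm_fderiv (u : EuclideanSpace ℝ (Fin d) → ℝ) (x : EuclideanSpace ℝ (Fin d))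
    (i : Fin d) : |grad u x i| ≤ ‖fderiv ℝ u x‖ := by
  simpa [grad] using (fderiv ℝ u x).le_opNorm (EuclideanSpace.single i (1 : ℝ))

theorem measurable_grad_apply (u : EuclideanSpace ℝ (Fin d) → ℝ) (i : Fin d) :
    Measurable fun x => grad u x i :=
  measurable_fderiv_apply_const ℝ u _

theorem grad_sub_const (u : EuclideanSpace ℝ (Fin d) → ℝ) (c : ℝ) :
    grad (fun x => u x - c) = grad u := by
  ext x i
  simp only [grad, fderiv_sub_const]

theorem integrable_mulVec_grad_dotProduct_grad {μ : Measure (EuclideanSpace ℝ (Fin d))}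
    [IsFiniteMeasure μ] {A : EuclideanSpace ℝ (Fin d) → Matrix (Fin d) (Fin d) ℝ}
    (hA : ∀ i j, Measurable fun x => A x i j) (hAbdd : ∃ M, ∀ x i j, |A x i j| ≤ M)
    {u : EuclideanSpace ℝ (Fin d) → ℝ} {M : ℝ} (hM : ∀ x, ‖fderiv ℝ u x‖ ≤ M) :
    Integrable (fun x => A x *ᵥ grad u x ⬝ᵥ grad u x) μ :=
  integrable_mulVec_dotProduct hA hAbdd (measurable_grad_apply u)
    ⟨M, fun x i => (abs_grad_le_norm_fderiv u x i).trans (hM x)⟩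

end Gradient

theorem eigenvalue_comparison_general (d : ℕ)
    (μ ν : Measure (EuclideanSpace ℝ (Fin d))) [IsFiniteMeasure μ] [IsFiniteMeasure ν]
    (K : ℝ) (hK : 1 ≤ K)
    (hμν : ENNReal.ofReal K⁻¹ • μ ≤ ν) (hνμ : ν ≤ ENNReal.ofReal K • μ)
    (A B : EuclideanSpace ℝ (Fin d) → Matrix (Fin d) (Fin d) ℝ)
    (hAmeas : ∀ i j, Measurable fun x => A x i j)
    (hBmeas : ∀ i j, Measurable fun x => B x i j)
    (hAbdd : ∃ M : ℝ, ∀ x i j, |A x i j| ≤ M)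
    (hBbdd : ∃ M : ℝ, ∀ x i j, |B x i j| ≤ M)
    (hApsd : ∀ x, (A x).IsSymm ∧ (A x).PosSemidef)
    (hAB : ∀ x (ξ : Fin d → ℝ), K⁻¹ * ((A x).mulVec ξ ⬝ᵥ ξ) ≤ (B x).mulVec ξ ⬝ᵥ ξ)
    (lam : ℝ) (hlam : 0 ≤ lam)
    (hPoincare : ∀ u : EuclideanSpace ℝ (Fin d) → ℝ, ContDiff ℝ 1 u →
      (∃ M : ℝ, ∀ x, |u x| ≤ M ∧ ‖fderiv ℝ u x‖ ≤ M) →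
      (∫ x, u x ∂μ) = 0 →
      lam * ∫ x, u x ^ 2 ∂μ ≤ ∫ x, (A x).mulVec (grad u x) ⬝ᵥ grad u x ∂μ) :
    ∀ u : EuclideanSpace ℝ (Fin d) → ℝ, ContDiff ℝ 1 u →
      (∃ M : ℝ, ∀ x, |u x| ≤ M ∧ ‖fderiv ℝ u x‖ ≤ M) →
      (∫ x, u x ∂ν) = 0 →
      (K ^ 3)⁻¹ * lam * ∫ x, u x ^ 2 ∂ν ≤
        ∫ x, (B x).mulVec (grad u x) ⬝ᵥ grad u x ∂ν := by
  rintro u hu ⟨M, hM⟩ hmean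
  have hK0 : 0 < K := one_pos.trans_le hK
  have hμν' : μ ≤ ENNReal.ofReal K • ν := Measure.le_smul_of_inv_smul_le
    (by simpa using hK0) ENNReal.ofReal_ne_top (by rwa [← ENNReal.ofReal_inv_of_pos hK0])
  set c := ⨍ x, u x ∂μ
  have hvM : ∀ x, |u x - c| ≤ M + |c| := fun x => (abs_sub _ _).trans (by grw [(hM x).1])
  have hv2 : Integrable (fun x => (u x - c) ^ 2) μ :=
    integrable_sq_of_abs_le (hu.continuous.measurable.sub_const c) hvM
  have hPv : lam * ∫ x, (u x - c) ^ 2 ∂μ ≤ ∫ x, A x *ᵥ grad u x ⬝ᵥ grad u x ∂μ := by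
    simpa only [grad_sub_const] using hPoincare _ (hu.sub contDiff_const)
      ⟨M + |c|, fun x => ⟨hvM x, by grw [fderiv_sub_const, (hM x).2]; simp⟩⟩
      (integral_sub_average μ u)
  have hAν := integrable_mulVec_grad_dotProduct_grad (μ := ν) hAmeas hAbdd fun x => (hM x).2
  have hBν := integrable_mulVec_grad_dotProduct_grad (μ := ν) hBmeas hBbdd fun x => (hM x).2
  have hA0 : 0 ≤ fun x => A x *ᵥ grad u x ⬝ᵥ grad u x := fun x =>
    (hApsd x).2.mulVec_dotProduct_self_nonneg (grad u x)
  have hu2 : ∫ x, u x ^ 2 ∂ν ≤ ∫ x, (u x - c) ^ 2 ∂ν :=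
    integral_sq_le_integral_sub_const_sq
      (integrable_of_abs_le hu.continuous.measurable fun x => (hM x).1)
      (integrable_sq_of_abs_le hu.continuous.measurable fun x => (hM x).1) hmean c
  calc (K ^ 3)⁻¹ * lam * ∫ x, u x ^ 2 ∂ν
      ≤ (K ^ 3)⁻¹ * lam * (K * ∫ x, (u x - c) ^ 2 ∂μ) := by
        grw [hu2, integral_le_mul_integral_of_le_smul hK0.le hνμ (fun x => sq_nonneg _) hv2]
    _ = K⁻¹ * K⁻¹ * (lam * ∫ x, (u x - c) ^ 2 ∂μ) := by field_simp
    _ ≤ K⁻¹ * K⁻¹ * (K * ∫ x, A x *ᵥ grad u x ⬝ᵥ grad u x ∂ν) := by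
        grw [hPv, integral_le_mul_integral_of_le_smul hK0.le hμν' hA0 hAν]
    _ = ∫ x, K⁻¹ * (A x *ᵥ grad u x ⬝ᵥ grad u x) ∂ν := by
        rw [integral_const_mul]; field_simp
    _ ≤ ∫ x, B x *ᵥ grad u x ⬝ᵥ grad u x ∂ν :=
        integral_mono (hAν.const_mul _) hBν fun x => hAB x (grad u x)

/-- **Comparability of first nonzero eigenvalues** (Euclidean rendition of Lemma 5.2 of
the paper, `λ₁(h) ≥ ε_K·λ₁(g)`).  If `K⁻¹·μ ≤ ν ≤ K·μ`, `A, B` are bounded measurable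
symmetric-positive-semidefinite-matrix-valued with `⟨Bξ,ξ⟩ ≥ K⁻¹⟨Aξ,ξ⟩`, and the Poincaré
inequality `∫⟨A∇u,∇u⟩dμ ≥ λ∫u²dμ` holds over `μ`-mean-zero `u`, then
`∫⟨B∇u,∇u⟩dν ≥ K⁻³λ∫u²dν` over `ν`-mean-zero `u`. -/
theorem eigenvalue_comparison (d : ℕ) (hd : 1 ≤ d)
    (μ ν : Measure (EuclideanSpace ℝ (Fin d))) [IsFiniteMeasure μ] [IsFiniteMeasure ν]
    (K : ℝ) (hK : 1 ≤ K)
    (hμν : ENNReal.ofReal K⁻¹ • μ ≤ ν) (hνμ : ν ≤ ENNReal.ofReal K • μ)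
    (A B : EuclideanSpace ℝ (Fin d) → Matrix (Fin d) (Fin d) ℝ)
    (hAmeas : ∀ i j, Measurable fun x => A x i j)
    (hBmeas : ∀ i j, Measurable fun x => B x i j)
    (hAbdd : ∃ M : ℝ, ∀ x i j, |A x i j| ≤ M)
    (hBbdd : ∃ M : ℝ, ∀ x i j, |B x i j| ≤ M)
    (hApsd : ∀ x, (A x).IsSymm ∧ (A x).PosSemidef)
    (hBpsd : ∀ x, (B x).IsSymm ∧ (B x).PosSemidef)
    (hAB : ∀ x (ξ : Fin d → ℝ), K⁻¹ * ((A x).mulVec ξ ⬝ᵥ ξ) ≤ (B x).mulVec ξ ⬝ᵥ ξ)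
    (lam : ℝ) (hlam : 0 ≤ lam)
    (hPoincare : ∀ u : EuclideanSpace ℝ (Fin d) → ℝ, ContDiff ℝ 1 u →
      (∃ M : ℝ, ∀ x, |u x| ≤ M ∧ ‖fderiv ℝ u x‖ ≤ M) →
      (∫ x, u x ∂μ) = 0 →
      lam * ∫ x, u x ^ 2 ∂μ ≤ ∫ x, (A x).mulVec (grad u x) ⬝ᵥ grad u x ∂μ) :
    ∀ u : EuclideanSpace ℝ (Fin d) → ℝ, ContDiff ℝ 1 u →
      (∃ M : ℝ, ∀ x, |u x| ≤ M ∧ ‖fderiv ℝ u x‖ ≤ M) →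
      (∫ x, u x ∂ν) = 0 →
      (K ^ 3)⁻¹ * lam * ∫ x, u x ^ 2 ∂ν ≤
        ∫ x, (B x).mulVec (grad u x) ⬝ᵥ grad u x ∂ν :=
  eigenvalue_comparison_general d μ ν K hK hμν hνμ A B hAmeas hBmeas hAbdd hBbdd hApsd hAB lam hlam
    hPoincare
end
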